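/- Let χ be a finite set, k, m ∈ ℕ with n = k·m, f, g ∈ ℝ, and h, φ : χ → ℝ. Let γ denote the standard Gaussian measure N(0,1) on ℝ. Then ∑_{x ∈ χⁿ} exp((f²/2)·(∑_{a=1}^{n} h(x_a))² + (g²/2)·∑_{l=0}^{k−1} (∑_{a=1}^{m} h(x_{a+l·m}))² + ∑_{a=1}^{n} φ(x_a)) = ∫_ℝ ( ∫_ℝ (∑_{t ∈ χ} exp(f·z·h(t) + g·y·h(t) + φ(t)))^m dγ(y) )^k dγ(z). -/

import Mathlib

/-! Both squares are linearized by the Gaussian identity `∫ exp (c y + d) dγ(y) = exp (c²/2 + d)`: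
expanding `(∑ t, exp (c y u t + w t)) ^ n` as a sum over `x : Fin n → χ` and integrating term by
term gives `∑ x, exp (c²/2 (∑ i, u (x i))² + ∑ i, w (x i))`. Applied first in `y` to a block of
`m` replicas (carrying the `f z h` term inside `w`), then in `z` to the `k` blocks, this yields the
sum over `Fin k → Fin m → χ ≃ (Fin k × Fin m → χ)`. -/

open MeasureTheory ProbabilityTheory Real
open scoped NNReal

lemma integral_exp_mul_add_gaussianReal (μ : ℝ) (v : ℝ≥0) (c d : ℝ) :
    ∫ y, exp (c * y + d) ∂gaussianReal μ v = exp (μ * c + v * c ^ 2 / 2 + d) := by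
  have mgf_eq := congrFun (mgf_fun_id_gaussianReal (μ := μ) (v := v)) c
  rw [mgf] at mgf_eq
  simp_rw [exp_add _ d, integral_mul_const, mgf_eq]

lemma integrable_exp_mul_add_gaussianReal (μ : ℝ) (v : ℝ≥0) (c d : ℝ) :
    Integrable (fun y ↦ exp (c * y + d)) (gaussianReal μ v) := by
  simp_rw [exp_add _ d]
  exact (integrable_exp_mul_gaussianReal c).mul_const _

lemma integral_sum_exp_pow_gaussianReal {χ : Type*} [Fintype χ] (v : ℝ≥0) (n : ℕ) (c : ℝ)
    (u w : χ → ℝ) :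
    ∫ y, (∑ t, exp (c * y * u t + w t)) ^ n ∂gaussianReal 0 v =
      ∑ x : Fin n → χ, exp (v * c ^ 2 / 2 * (∑ i, u (x i)) ^ 2 + ∑ i, w (x i)) := by
  have expand : ∀ y, (∑ t, exp (c * y * u t + w t)) ^ n =
      ∑ x : Fin n → χ, exp ((c * ∑ i, u (x i)) * y + ∑ i, w (x i)) := by
    intro y
    rw [Fintype.sum_pow]
    refine Fintype.sum_congr _ _ fun x ↦ ?_
    rw [← exp_sum, Finset.mul_sum, Finset.sum_mul, ← Finset.sum_add_distrib]
    exact congrArg exp (Finset.sum_congr rfl fun i _ ↦ by ring)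
  simp_rw [expand]
  rw [integral_finsetSum _ fun x _ ↦ integrable_exp_mul_add_gaussianReal _ _ _ _]
  refine Fintype.sum_congr _ _ fun x ↦ ?_
  rw [integral_exp_mul_add_gaussianReal]
  congr 1
  ring

theorem stmt_8 (χ : Type*) [Fintype χ] (k m : ℕ) (f g : ℝ) (h φ : χ → ℝ) :
    ∑ x : Fin k × Fin m → χ,
        Real.exp ((f ^ 2 / 2) * (∑ a : Fin k × Fin m, h (x a)) ^ 2 +
          (g ^ 2 / 2) * ∑ l : Fin k, (∑ a : Fin m, h (x (l, a))) ^ 2 +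
          ∑ a : Fin k × Fin m, φ (x a)) =
      ∫ z : ℝ,
          (∫ y : ℝ,
              (∑ t : χ, Real.exp (f * z * h t + g * y * h t + φ t)) ^ m
            ∂(gaussianReal 0 1)) ^ k
        ∂(gaussianReal 0 1) := by
  have inner : ∀ z, ∫ y, (∑ t, exp (f * z * h t + g * y * h t + φ t)) ^ m ∂gaussianReal 0 1 =
      ∑ x : Fin m → χ, exp (f * z * (∑ a, h (x a)) +
        (g ^ 2 / 2 * (∑ a, h (x a)) ^ 2 + ∑ a, φ (x a))) := by
    intro z
    have regroup : ∀ y t, f * z * h t + g * y * h t + φ t = g * y * h t + (f * z * h t + φ t) :=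
      fun _ _ ↦ by ring
    simp_rw [regroup, integral_sum_exp_pow_gaussianReal]
    refine Fintype.sum_congr _ _ fun x ↦ ?_
    rw [Finset.sum_add_distrib, ← Finset.mul_sum, NNReal.coe_one]
    congr 1
    ring
  simp_rw [inner, integral_sum_exp_pow_gaussianReal]
  refine Fintype.sum_equiv (Equiv.curry (Fin k) (Fin m) χ) _ _ fun x ↦ ?_
  simp only [Equiv.curry_apply, Function.curry, Fintype.sum_prod_type, Finset.sum_add_distrib,
    ← Finset.mul_sum, NNReal.coe_one]
  congr 1
  ring
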